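/- Let V be a finite-dimensional vector space, T ∈ GL(V), W a T-stable increasing filtration. If T has a Jordan block of size r ≥ 1 for eigenvalue 1 acting on some graded piece Gr^W_i V, then T has a Jordan block of size at least r for eigenvalue 1 on V. -/
import Mathlib


/-- If an automorphism `T` preserves an exhaustive separated increasing filtration `W` and
has a Jordan block of size `r ≥ 1` for the eigenvalue `1` on some graded piece
`Gr^W_i V` (witnessed by `v ∈ W i` with `(T-1)^(r-1) v ∉ W (i-1)` and
`(T-1)^r v ∈ W (i-1)`), then `T` has a Jordan block of size at least `r` for the
eigenvalue `1` on `V`, i.e. `ker (T-1)^r ≠ ker (T-1)^(r-1)`. -/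
theorem jordan_block_of_graded_block
    {V : Type*} [AddCommGroup V] [Module ℚ V] [FiniteDimensional ℚ V]
    (W : ℤ → Submodule ℚ V) (hmono : Monotone W)
    (hbot : ∃ a, W a = ⊥) (htop : ∃ b, W b = ⊤)
    (T : Module.End ℚ V) (hbij : Function.Bijective T)
    (hstab : ∀ j, (W j).map T = W j)
    (i : ℤ) (r : ℕ) (hr : 1 ≤ r)
    (hblock : ∃ v ∈ W i, ((T - 1) ^ (r - 1)) v ∉ W (i - 1) ∧ ((T - 1) ^ r) v ∈ W (i - 1)) :
    LinearMap.ker ((T - 1) ^ r) ≠ LinearMap.ker ((T - 1) ^ (r - 1)) := by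
  intro h
  obtain ⟨v, hv, hv1, hv2⟩ := hblock
  set N : Module.End ℚ V := T - 1 with hN
  set k : ℕ := r - 1 with hk
  have hrk : r = k + 1 := by omega
  -- N maps each W j into itself
  have hNW : ∀ j, ∀ x ∈ W j, N x ∈ W j := by
    intro j x hx
    have hT : T x ∈ W j := by
      rw [← hstab j]; exact Submodule.mem_map_of_mem hx
    simpa [hN] using (W j).sub_mem hT hx
  -- anything in range N^k killed by N is zero
  have hinj0 : ∀ x ∈ LinearMap.range (N ^ k), N x = 0 → x = 0 := by
    intro x hx hx0
    obtain ⟨y, hy⟩ := hx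
    have hry : (N ^ r) y = 0 := by
      rw [hrk, pow_succ', Module.End.mul_apply, hy, hx0]
    have : y ∈ LinearMap.ker (N ^ k) := by
      rw [← h]; exact hry
    rw [← hy]
    exact this
  -- the submodule M = range N^k ⊓ W (i-1)
  set M : Submodule ℚ V := LinearMap.range (N ^ k) ⊓ W (i - 1) with hM
  have hNrange : ∀ x ∈ LinearMap.range (N ^ k), N x ∈ LinearMap.range (N ^ k) := by
    rintro x ⟨y, rfl⟩
    exact ⟨N y, by rw [← Module.End.mul_apply, ← Module.End.mul_apply, ← pow_succ, ← pow_succ']⟩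
  have hmem : ∀ x ∈ M, N x ∈ M := fun x hx => ⟨hNrange x hx.1, hNW _ x hx.2⟩
  set f : M →ₗ[ℚ] M := N.restrict hmem with hf
  have hfinj : Function.Injective f := by
    intro a b hab
    have : N (a.1 - b.1) = 0 := by
      have := congrArg Subtype.val hab
      simp only [hf, LinearMap.restrict_apply] at this
      rw [map_sub, this, sub_self]
    have := hinj0 _ (M.sub_mem a.2 b.2).1 this
    exact Subtype.ext (sub_eq_zero.mp this)
  have hfsurj : Function.Surjective f := (LinearMap.injective_iff_surjective).mp hfinj
  have hNrv : (N ^ r) v ∈ M := by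
    refine ⟨⟨N v, ?_⟩, hv2⟩
    rw [← Module.End.mul_apply, hrk, pow_succ]
  obtain ⟨z, hz⟩ := hfsurj ⟨(N ^ r) v, hNrv⟩
  have hz' : N z.1 = (N ^ r) v := congrArg Subtype.val hz
  have hdiff : N ((N ^ k) v - z.1) = 0 := by
    rw [map_sub, hz', ← Module.End.mul_apply, ← pow_succ', ← hrk, sub_self]
  have hrng : (N ^ k) v - z.1 ∈ LinearMap.range (N ^ k) :=
    Submodule.sub_mem _ ⟨v, rfl⟩ z.2.1
  have : (N ^ k) v = z.1 := sub_eq_zero.mp (hinj0 _ hrng hdiff)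
  exact hv1 (this ▸ z.2.2)
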